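/- arXiv:2004.14986 — 2 statements merged into one kernel-verified Lean document; each statement's English description precedes it below -/
import Mathlib

section
/- For every K ≥ 2, every N with 1 ≤ N ≤ K − 1, and every prime power p ≥ K, there exist a finite probability space and random variables on it: W uniformly distributed on F_p; keys Z_1, …, Z_K each taking values in F_p; and for every subset Q ⊆ {1, …, K} with |Q| = N a signal X_Q taking values in F_p^{min(N, K−N+1)} that is a deterministic function of (W, Z_1, …, Z_K); such that W is independent of (Z_1, …, Z_K), and for every such Q: H(W | (X_Q, Z_q)) = 0 for every q ∈ Q, and I(W ; (X_Q, Z_e)) = 0 for every e ∉ Q. (Hence broadcast bandwidth β = min(N, K − N + 1) is achievable at minimum key storage α = 1.) -/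
open scoped BigOperators

/-- A finite probability space: a finite sample space `Ω` together with a
probability mass function `p`. -/
structure FinProbSpace : Type 1 where
  Ω : Type
  fin : Fintype Ω
  p : Ω → ℝ
  nonneg : ∀ ω, 0 ≤ p ω
  sum_one : Finset.sum fin.elems p = 1

namespace FinProbSpace

/-- Probability that the random variable `X` takes the value `s`. -/
noncomputable def prob (μ : FinProbSpace) {S : Type} [DecidableEq S]
    (X : μ.Ω → S) (s : S) : ℝ :=
  letI := μ.fin
  ∑ ω : μ.Ω, if X ω = s then μ.p ω else 0

/-- Shannon entropy of a random variable with finite range. -/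
noncomputable def H (μ : FinProbSpace) {S : Type} [Fintype S] [DecidableEq S]
    (X : μ.Ω → S) : ℝ :=
  ∑ s : S, Real.negMulLog (μ.prob X s)

/-- Conditional Shannon entropy `H(X | Y)`. -/
noncomputable def Hc (μ : FinProbSpace) {S T : Type} [Fintype S] [DecidableEq S]
    [Fintype T] [DecidableEq T] (X : μ.Ω → S) (Y : μ.Ω → T) : ℝ :=
  μ.H (fun ω => (X ω, Y ω)) - μ.H Y

/-- Mutual information `I(X ; Y)`. -/
noncomputable def MI (μ : FinProbSpace) {S T : Type} [Fintype S] [DecidableEq S]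
    [Fintype T] [DecidableEq T] (X : μ.Ω → S) (Y : μ.Ω → T) : ℝ :=
  μ.H X + μ.H Y - μ.H (fun ω => (X ω, Y ω))

/-- Conditional mutual information `I(X ; Y | Z)`. -/
noncomputable def CMI (μ : FinProbSpace) {S T U : Type} [Fintype S] [DecidableEq S]
    [Fintype T] [DecidableEq T] [Fintype U] [DecidableEq U]
    (X : μ.Ω → S) (Y : μ.Ω → T) (Z : μ.Ω → U) : ℝ :=
  μ.H (fun ω => (X ω, Z ω)) + μ.H (fun ω => (Y ω, Z ω))
    - μ.H (fun ω => (X ω, Y ω, Z ω)) - μ.H Z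

/-- Independence of two random variables: the joint pmf factorizes. -/
def IndepRV (μ : FinProbSpace) {S T : Type} [DecidableEq S] [DecidableEq T]
    (X : μ.Ω → S) (Y : μ.Ω → T) : Prop :=
  ∀ s t, μ.prob (fun ω => (X ω, Y ω)) (s, t) = μ.prob X s * μ.prob Y t

end FinProbSpace

open FinProbSpace

lemma sum_prob_eq_one (μ : FinProbSpace) {S : Type} [Fintype S] [DecidableEq S]
    (X : μ.Ω → S) : ∑ s : S, μ.prob X s = 1 := by
  letI := μ.fin
  unfold FinProbSpace.prob
  rw [Finset.sum_comm]
  simp only [Finset.sum_ite_eq, Finset.mem_univ, if_true]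
  exact μ.sum_one

lemma H_comp_inj (μ : FinProbSpace) {S T : Type} [Fintype S] [DecidableEq S]
    [Fintype T] [DecidableEq T] (Y : μ.Ω → T) (i : T → S) (hi : Function.Injective i) :
    μ.H (fun ω => i (Y ω)) = μ.H Y := by
  letI := μ.fin
  have hio : ∀ t, μ.prob (fun ω => i (Y ω)) (i t) = μ.prob Y t := by
    intro t
    unfold FinProbSpace.prob
    exact Finset.sum_congr rfl fun ω _ => by simp [hi.eq_iff]
  have hz : ∀ s : S, s ∉ (Finset.univ : Finset T).image i →
      μ.prob (fun ω => i (Y ω)) s = 0 := by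
    intro s hs
    apply Finset.sum_eq_zero
    intro ω _
    rw [if_neg]
    intro h
    exact hs (Finset.mem_image.2 ⟨Y ω, Finset.mem_univ _, h⟩)
  unfold FinProbSpace.H
  rw [← Finset.sum_subset (Finset.subset_univ ((Finset.univ : Finset T).image i))
    (fun s _ hs => by rw [hz s hs, Real.negMulLog_zero]),
    Finset.sum_image (fun x _ y _ h => hi h)]
  exact Finset.sum_congr rfl fun t _ => by rw [hio]

lemma Hc_eq_zero_of_det (μ : FinProbSpace) {S T : Type} [Fintype S] [DecidableEq S]
    [Fintype T] [DecidableEq T] (X : μ.Ω → S) (Y : μ.Ω → T) (g : T → S)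
    (h : ∀ ω, X ω = g (Y ω)) : μ.Hc X Y = 0 := by
  unfold FinProbSpace.Hc
  have h2 : (fun ω => (X ω, Y ω)) = fun ω => ((fun t => (g t, t)) (Y ω)) :=
    funext fun ω => by rw [h ω]
  rw [h2, H_comp_inj μ Y (fun t => (g t, t)) (fun t1 t2 ht => congrArg Prod.snd ht), sub_self]

lemma MI_eq_zero_of_indep (μ : FinProbSpace) {S T : Type} [Fintype S] [DecidableEq S]
    [Fintype T] [DecidableEq T] (X : μ.Ω → S) (Y : μ.Ω → T)
    (h : μ.IndepRV X Y) : μ.MI X Y = 0 := by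
  unfold FinProbSpace.MI
  have hJ : μ.H (fun ω => (X ω, Y ω)) = μ.H X + μ.H Y := by
    unfold FinProbSpace.H
    rw [Fintype.sum_prod_type]
    have : ∀ s t, Real.negMulLog (μ.prob (fun ω => (X ω, Y ω)) (s, t))
        = μ.prob Y t * Real.negMulLog (μ.prob X s)
          + μ.prob X s * Real.negMulLog (μ.prob Y t) := by
      intro s t; rw [h s t, Real.negMulLog_mul]
    simp only [this]
    simp only [Finset.sum_add_distrib, ← Finset.sum_mul, ← Finset.mul_sum]
    rw [sum_prob_eq_one μ X, sum_prob_eq_one μ Y]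
    ring
  rw [hJ]; ring

noncomputable def unifPS (F V : Type) [Fintype F] [Fintype V] [Nonempty F] [Nonempty V] :
    FinProbSpace where
  Ω := F × V
  fin := inferInstance
  p := fun _ => ((Fintype.card F : ℝ) * (Fintype.card V : ℝ))⁻¹
  nonneg := fun _ => by positivity
  sum_one := by
    have hF : (Fintype.card F : ℝ) ≠ 0 := Nat.cast_ne_zero.2 Fintype.card_ne_zero
    have hV : (Fintype.card V : ℝ) ≠ 0 := Nat.cast_ne_zero.2 Fintype.card_ne_zero
    show ∑ _ω : F × V, ((Fintype.card F : ℝ) * (Fintype.card V : ℝ))⁻¹ = 1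
    rw [Finset.sum_const, Finset.card_univ, Fintype.card_prod, nsmul_eq_mul,
      Nat.cast_mul, mul_inv_cancel₀ (by exact mul_ne_zero hF hV)]

section Unif

variable {F V : Type} [Fintype F] [Fintype V] [Nonempty F] [Nonempty V] [DecidableEq F]

lemma unifPS_prob_fst (w : F) :
    (unifPS F V).prob (fun ω => ω.1) w = 1 / (Fintype.card F : ℝ) := by
  have hF : (Fintype.card F : ℝ) ≠ 0 := Nat.cast_ne_zero.2 Fintype.card_ne_zero
  have hV : (Fintype.card V : ℝ) ≠ 0 := Nat.cast_ne_zero.2 Fintype.card_ne_zero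
  show (∑ ω : F × V, if ω.1 = w then ((Fintype.card F : ℝ) * (Fintype.card V : ℝ))⁻¹ else 0)
      = 1 / (Fintype.card F : ℝ)
  rw [Fintype.sum_prod_type]
  have h1 : ∀ x : F, (∑ _v : V, if x = w then ((Fintype.card F : ℝ) * (Fintype.card V : ℝ))⁻¹ else 0)
      = if x = w then (Fintype.card V : ℝ) * ((Fintype.card F : ℝ) * (Fintype.card V : ℝ))⁻¹ else 0 := by
    intro x; by_cases h : x = w <;> simp [h, Finset.sum_const, Finset.card_univ]
  simp only [h1]
  rw [Finset.sum_ite_eq' Finset.univ w]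
  simp only [Finset.mem_univ, if_true]
  field_simp

lemma indep_of_shift {T : Type} [DecidableEq T] (ψ : F × V → T) (w0 : F)
    (ρ : F → V → V) (hρ : ∀ w, Function.Bijective (ρ w))
    (hψ : ∀ w v, ψ (w, v) = ψ (w0, ρ w v)) :
    (unifPS F V).IndepRV (fun ω => ω.1) ψ := by
  intro s t
  have hF : (Fintype.card F : ℝ) ≠ 0 := Nat.cast_ne_zero.2 Fintype.card_ne_zero
  have hV : (Fintype.card V : ℝ) ≠ 0 := Nat.cast_ne_zero.2 Fintype.card_ne_zero
  set c : ℝ := ((Fintype.card F : ℝ) * (Fintype.card V : ℝ))⁻¹ with hc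
  have key : ∀ w : F, (∑ v : V, if ψ (w, v) = t then c else 0)
      = ∑ v : V, if ψ (w0, v) = t then c else 0 := by
    intro w
    exact Fintype.sum_bijective (ρ w) (hρ w) _ _ (fun v => by rw [hψ w v])
  have h1 : (unifPS F V).prob (fun ω => ((fun ω : F × V => ω.1) ω, ψ ω)) (s, t)
      = ∑ v : V, if ψ (w0, v) = t then c else 0 := by
    show (∑ ω : F × V, if (ω.1, ψ ω) = (s, t) then c else 0) = _
    rw [Fintype.sum_prod_type]
    have : ∀ (w : F) (v : V), (if ((w, v).1, ψ (w, v)) = (s, t) then c else 0)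
        = if w = s then (if ψ (w, v) = t then c else 0) else 0 := by
      intro w v
      by_cases h : w = s <;> by_cases h' : ψ (w, v) = t <;>
        simp [h, h', Prod.ext_iff]
    simp only [this]
    have this2 : ∀ x : F, (∑ v : V, if x = s then (if ψ (x, v) = t then c else 0) else 0)
        = if x = s then (∑ v : V, if ψ (x, v) = t then c else 0) else 0 := by
      intro x; by_cases h : x = s <;> simp [h]
    simp only [this2]
    rw [Finset.sum_ite_eq' Finset.univ s]
    simp only [Finset.mem_univ, if_true]
    exact key s
  have h2 : (unifPS F V).prob ψ t = (Fintype.card F : ℝ) *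
      ∑ v : V, if ψ (w0, v) = t then c else 0 := by
    show (∑ ω : F × V, if ψ ω = t then c else 0) = _
    rw [Fintype.sum_prod_type]
    have : ∀ w : F, (∑ v : V, if ψ (w, v) = t then c else 0)
        = ∑ v : V, if ψ (w0, v) = t then c else 0 := key
    simp only [this]
    rw [Finset.sum_const, Finset.card_univ, nsmul_eq_mul]
  rw [h1, h2, unifPS_prob_fst]
  field_simp

end Unif

def polyEv {F : Type} [CommRing F] {m : ℕ} (c : Fin m → F) (x : F) : F :=
  ∑ j : Fin m, c j * x ^ (j : ℕ)

lemma polyEv_add_smul {F : Type} [CommRing F] {m : ℕ} (c d : Fin m → F) (w x : F) :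
    polyEv (c + w • d) x = polyEv c x + w * polyEv d x := by
  unfold polyEv
  rw [Finset.mul_sum, ← Finset.sum_add_distrib]
  exact Finset.sum_congr rfl fun j _ => by
    simp [Pi.add_apply, Pi.smul_apply, smul_eq_mul]; ring

lemma evmap_bijective {F : Type} [Field F] {m : ℕ} (b : Fin m → F)
    (hb : Function.Injective b) :
    Function.Bijective (fun c : Fin m → F => fun i => polyEv c (b i)) := by
  have heq : (fun c : Fin m → F => fun i => polyEv c (b i))
      = (Matrix.vandermonde b).mulVec := by
    funext c i
    simp [polyEv, Matrix.mulVec, Matrix.vandermonde, dotProduct, mul_comm]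
  have hdet : (Matrix.vandermonde b).det ≠ 0 := by
    rw [Matrix.det_vandermonde]
    apply Finset.prod_ne_zero_iff.2
    intro i _
    apply Finset.prod_ne_zero_iff.2
    intro j hj
    have : i < j := Finset.mem_Ioi.1 hj
    exact sub_ne_zero.2 fun h => absurd (hb h.symm) this.ne
  have hu : IsUnit (Matrix.vandermonde b) :=
    (Matrix.isUnit_iff_isUnit_det _).2 (isUnit_iff_ne_zero.2 hdet)
  rw [heq]
  exact ⟨Matrix.mulVec_injective_iff_isUnit.2 hu, Matrix.mulVec_surjective_iff_isUnit.2 hu⟩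


set_option maxHeartbeats 2000000 in
/-- **Achievability part of Theorem 3**: broadcast bandwidth
β = min(N, K − N + 1) is achievable at minimum key storage α = 1. For every
`K ≥ 2`, every `1 ≤ N ≤ K − 1`, and every finite field `F` with at least `K`
elements (i.e. every prime power `p ≥ K`), there are a finite probability
space, a message `W` uniform on `F`, keys `Z_k` with values in `F`
independent of `W`, and for every size-`N` set `Q` a broadcast signal
`X_Q ∈ F^{min(N, K−N+1)}` that is a deterministic function of
`(W, Z_1, …, Z_K)`, such that correctness and security hold for every such `Q`. -/
theorem achievability_min_key_storage
    (K N : ℕ) (hK : 2 ≤ K) (hN1 : 1 ≤ N) (hNK : N ≤ K - 1)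
    (F : Type) [Field F] [Fintype F] [DecidableEq F] (hF : K ≤ Fintype.card F) :
    ∃ (μ : FinProbSpace) (W : μ.Ω → F) (Z : Fin K → μ.Ω → F)
      (X : Finset (Fin K) → μ.Ω → (Fin (min N (K - N + 1)) → F)),
      (∀ w : F, μ.prob W w = 1 / (Fintype.card F : ℝ))
      ∧ μ.IndepRV W (fun ω => fun k : Fin K => Z k ω)
      ∧ (∀ Q : Finset (Fin K), Q.card = N →
          (∃ f : F × (Fin K → F) → (Fin (min N (K - N + 1)) → F),
            ∀ ω, X Q ω = f (W ω, fun k : Fin K => Z k ω))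
          ∧ (∀ q ∈ Q, μ.Hc W (fun ω => (X Q ω, Z q ω)) = 0)
          ∧ (∀ e ∉ Q, μ.MI W (fun ω => (X Q ω, Z e ω)) = 0)) := by
  classical
  set m : ℕ := K - N + 1 with hm
  have hKN : N + 1 ≤ K := by omega
  have hm2 : 2 ≤ m := by omega
  have hmK : m ≤ K := by omega
  obtain ⟨aEmb⟩ : Nonempty (Fin K ↪ F) :=
    Function.Embedding.nonempty_of_card_le (by simpa using hF)
  set a : Fin K → F := ⇑aEmb with haa
  have ha : Function.Injective a := aEmb.injective
  have hFne : Nonempty F := inferInstance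
  by_cases hcase : N < m
  · -- branch 1 : L = N, X_Q = (W + Z_{q_i})_i
    have hLN : min N (K - N + 1) = N := min_eq_left (by omega)
    refine ⟨unifPS F (Fin m → F), fun ω => ω.1, fun k ω => polyEv ω.2 (a k),
      fun Q ω i => if hQ : Q.card = N then
        ω.1 + polyEv ω.2 (a (Q.orderEmbOfFin hQ ⟨(i : ℕ), lt_of_lt_of_le i.isLt hLN.le⟩)) else 0,
      fun w => unifPS_prob_fst w,
      indep_of_shift _ (0 : F) (fun _ v => v) (fun _ => Function.bijective_id)
        (fun _ _ => rfl), ?_⟩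
    intro Q hQ
    set σ := Q.orderEmbOfFin hQ with hσ
    refine ⟨⟨fun wz i => wz.1 + wz.2 (σ ⟨(i : ℕ), lt_of_lt_of_le i.isLt hLN.le⟩), ?_⟩, ?_, ?_⟩
    · intro ω
      funext i
      simp only [dif_pos hQ]
      rfl
    · -- correctness
      intro q hq
      have hq' : q ∈ Set.range σ := by rw [Q.range_orderEmbOfFin hQ]; exact hq
      obtain ⟨i0, hi0⟩ := hq'
      refine Hc_eq_zero_of_det _ _ _
        (fun y => y.1 ⟨(i0 : ℕ), lt_of_lt_of_le i0.isLt hLN.ge⟩ - y.2) ?_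
      intro ω
      simp only [dif_pos hQ]
      have : (⟨((⟨(i0 : ℕ), lt_of_lt_of_le i0.isLt hLN.ge⟩ : Fin (min N (K - N + 1))) : ℕ),
          lt_of_lt_of_le (Fin.isLt _) hLN.le⟩ : Fin N) = i0 := Fin.ext rfl
      rw [this, hi0]
      ring
    · -- security
      intro e he
      have hins : insert e Q ⊆ Finset.univ := Finset.subset_univ _
      have hinscard : (insert e Q).card = N + 1 := by
        rw [Finset.card_insert_of_notMem he, hQ]
      obtain ⟨S, hQS, _, hScard⟩ := Finset.exists_subsuperset_card_eq hins
        (by omega : (insert e Q).card ≤ m)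
        (by simp only [Finset.card_univ, Fintype.card_fin]; omega)
      set τ := S.orderEmbOfFin hScard with hτ
      have hb : Function.Injective (fun j : Fin m => a (τ j)) :=
        fun j1 j2 h => τ.injective (ha h)
      obtain ⟨d, hd⟩ := (evmap_bijective _ hb).surjective
        (fun j => if τ j ∈ Q then (1 : F) else 0)
      have hdval : ∀ k ∈ S, polyEv d (a k) = if k ∈ Q then 1 else 0 := by
        intro k hk
        have : k ∈ Set.range τ := by rw [S.range_orderEmbOfFin hScard]; exact hk
        obtain ⟨j, hj⟩ := this
        have := congrFun hd j
        simp only at this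
        rw [← hj, this]
      have hdQ : ∀ k ∈ Q, polyEv d (a k) = 1 := by
        intro k hk
        rw [hdval k (hQS (Finset.mem_insert_of_mem hk)), if_pos hk]
      have hde : polyEv d (a e) = 0 := by
        rw [hdval e (hQS (Finset.mem_insert_self e Q)), if_neg he]
      apply MI_eq_zero_of_indep
      apply indep_of_shift _ (0 : F) (fun w v => v + w • d)
        (fun w => (Equiv.addRight (w • d)).bijective)
      intro w v
      apply Prod.ext
      · funext i
        simp only [dif_pos hQ]
        rw [polyEv_add_smul, hdQ _ (Q.orderEmbOfFin_mem hQ _)]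
        ring
      · simp only
        rw [polyEv_add_smul, hde]
        ring
  · -- branch 2 : L = m
    have hmN : m ≤ N := by omega
    have hLm : min N (K - N + 1) = K - N + 1 := min_eq_right (by omega)
    have hiLt : ∀ i : Fin (min N (K - N + 1)), (i : ℕ) < m :=
      fun i => lt_of_lt_of_le i.isLt hLm.le
    have hm1m : m - 1 < m := by omega
    -- full-point recovery for the deterministic-function part
    have hbfull : Function.Injective (fun j : Fin m => a (Fin.castLE hmK j)) :=
      fun j1 j2 h => Fin.castLE_injective hmK (ha h)
    refine ⟨unifPS F (Fin m → F), fun ω => ω.1, fun k ω => polyEv ω.2 (a k),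
      fun Q ω i => if hQ : Q.card = N then
        (if hi : (i : ℕ) = 0 then ω.1 + ω.2 ⟨m - 1, hm1m⟩
         else polyEv ω.2 (a (Qᶜ.orderEmbOfFin
           (show Qᶜ.card = m - 1 by rw [Finset.card_compl, hQ, Fintype.card_fin]; omega)
           ⟨(i : ℕ) - 1, by have := hiLt i; omega⟩)))
      else 0,
      fun w => unifPS_prob_fst w,
      indep_of_shift _ (0 : F) (fun _ v => v) (fun _ => Function.bijective_id)
        (fun _ _ => rfl), ?_⟩
    intro Q hQ
    have hQc : Qᶜ.card = m - 1 := by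
      have h1 : Qᶜ.card = K - N := by rw [Finset.card_compl, hQ, Fintype.card_fin]
      omega
    -- the shifting polynomial d
    set P : Polynomial F := ∏ k ∈ Qᶜ, (Polynomial.X - Polynomial.C (a k)) with hPdef
    have hmon : P.Monic :=
      Polynomial.monic_prod_of_monic _ _ fun k _ => Polynomial.monic_X_sub_C _
    have hdeg : P.natDegree = m - 1 := by
      rw [hPdef, Polynomial.natDegree_prod_of_monic _ _
        (fun k _ => Polynomial.monic_X_sub_C _)]
      simp only [Polynomial.natDegree_X_sub_C]
      rw [Finset.sum_const, smul_eq_mul, mul_one, hQc]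
    set d : Fin m → F := fun j => P.coeff (j : ℕ) with hddef
    have hdtop : ∀ h : m - 1 < m, d ⟨m - 1, h⟩ = 1 := by
      intro h
      show P.coeff (m - 1) = 1
      rw [← hdeg]
      exact hmon
    have hevd : ∀ x, polyEv d x = P.eval x := by
      intro x
      rw [Polynomial.eval_eq_sum_range' (n := m) (by omega) x,
        ← Fin.sum_univ_eq_sum_range (fun j => P.coeff j * x ^ j) m]
      rfl
    have hdQc : ∀ k, k ∉ Q → polyEv d (a k) = 0 := by
      intro k hk
      rw [hevd, hPdef, Polynomial.eval_prod]
      exact Finset.prod_eq_zero (Finset.mem_compl.2 hk) (by simp)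
    refine ⟨⟨fun wz i => if hi : (i : ℕ) = 0 then
        wz.1 + Function.invFun (fun c : Fin m → F => fun j => polyEv c (a (Fin.castLE hmK j)))
          (fun j => wz.2 (Fin.castLE hmK j)) ⟨m - 1, hm1m⟩
      else wz.2 (Qᶜ.orderEmbOfFin hQc ⟨(i : ℕ) - 1, by have := hiLt i; omega⟩), ?_⟩, ?_, ?_⟩
    · intro ω
      funext i
      simp only [dif_pos hQ]
      by_cases hi : (i : ℕ) = 0
      · simp only [dif_pos hi]
        have hrec : Function.invFun
            (fun c : Fin m → F => fun j => polyEv c (a (Fin.castLE hmK j)))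
            ((fun c : Fin m → F => fun j => polyEv c (a (Fin.castLE hmK j))) ω.2) = ω.2 :=
          Function.leftInverse_invFun (evmap_bijective _ hbfull).injective ω.2
        exact (congrArg (fun u : Fin m → F => ω.1 + u ⟨m - 1, hm1m⟩) hrec).symm
      · simp only [dif_neg hi]
    · -- correctness
      intro q hq
      set b : Fin m → F := fun i =>
        if hi : (i : ℕ) < m - 1 then a (Qᶜ.orderEmbOfFin hQc ⟨(i : ℕ), hi⟩) else a q
        with hbdef
      have hbinj : Function.Injective b := by
        intro i j h
        rw [hbdef] at h
        simp only at h
        by_cases hi : (i : ℕ) < m - 1 <;> by_cases hj : (j : ℕ) < m - 1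
        · rw [dif_pos hi, dif_pos hj] at h
          have h2 := (Qᶜ.orderEmbOfFin hQc).injective (ha h)
          simp only [Fin.mk.injEq] at h2
          exact Fin.ext h2
        · rw [dif_pos hi, dif_neg hj] at h
          have hmem := Qᶜ.orderEmbOfFin_mem hQc ⟨(i : ℕ), hi⟩
          rw [ha h] at hmem
          exact absurd hq (Finset.mem_compl.1 hmem)
        · rw [dif_neg hi, dif_pos hj] at h
          have hmem := Qᶜ.orderEmbOfFin_mem hQc ⟨(j : ℕ), hj⟩
          rw [← ha h] at hmem
          exact absurd hq (Finset.mem_compl.1 hmem)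
        · have hi' := i.isLt; have hj' := j.isLt
          exact Fin.ext (by omega)
      refine Hc_eq_zero_of_det _ _ _
        (fun y : (Fin (min N (K - N + 1)) → F) × F =>
          y.1 ⟨0, by rw [hLm]; omega⟩ -
          Function.invFun (fun c : Fin m → F => fun i => polyEv c (b i))
            (fun i : Fin m => if hi : (i : ℕ) < m - 1
              then y.1 ⟨(i : ℕ) + 1, by rw [hLm]; omega⟩ else y.2) ⟨m - 1, hm1m⟩) ?_
      intro ω
      simp only [dif_pos hQ]
      rw [dif_pos trivial]
      have hvec : (fun i : Fin m => if h : (i : ℕ) < m - 1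
          then (if h2 : (i : ℕ) + 1 = 0 then ω.1 + ω.2 ⟨m - 1, hm1m⟩
            else polyEv ω.2 (a (Qᶜ.orderEmbOfFin hQc ⟨(i : ℕ) + 1 - 1, by omega⟩)))
          else polyEv ω.2 (a q))
          = (fun c : Fin m → F => fun i => polyEv c (b i)) ω.2 := by
        funext i
        by_cases hi : (i : ℕ) < m - 1
        · rw [dif_pos hi, dif_neg (Nat.succ_ne_zero _)]
          have hidx : (⟨(i : ℕ) + 1 - 1, by omega⟩ : Fin (m - 1)) = ⟨(i : ℕ), hi⟩ :=
            Fin.ext (by simp)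
          rw [hidx]
          show _ = polyEv ω.2 (b i)
          rw [hbdef]
          simp only [dif_pos hi]
        · rw [dif_neg hi]
          show _ = polyEv ω.2 (b i)
          rw [hbdef]
          simp only [dif_neg hi]
      rw [hvec, Function.leftInverse_invFun (evmap_bijective _ hbinj).injective ω.2]
      ring
    · -- security
      intro e he
      apply MI_eq_zero_of_indep
      apply indep_of_shift _ (0 : F) (fun w v => v + w • d)
        (fun w => (Equiv.addRight (w • d)).bijective)
      intro w v
      apply Prod.ext
      · funext i
        simp only [dif_pos hQ]
        by_cases hi : (i : ℕ) = 0
        · rw [dif_pos hi, dif_pos hi]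
          simp only [Pi.add_apply, Pi.smul_apply, smul_eq_mul]
          rw [hdtop hm1m]
          ring
        · rw [dif_neg hi, dif_neg hi]
          rw [polyEv_add_smul, hdQc _ (Finset.mem_compl.1
            (Qᶜ.orderEmbOfFin_mem _ _)), ]
          ring
      · simp only
        rw [polyEv_add_smul, hdQc _ he]
        ring
end

section
/- Let W, Z_1, Z_2, Z_3, X, X' be random variables with finite ranges on a common finite probability space. Assume: (independence) I(W ; (Z_1, Z_2, Z_3)) = 0; for the signal X serving qualified set {1, 2}: H(W | (X, Z_1)) = 0, H(W | (X, Z_2)) = 0, and I(W ; (X, Z_3)) = 0; and for the signal X' serving qualified set {1, 3}: H(W | (X', Z_1)) = 0 and I(W ; (X', Z_2)) = 0. Then H(Z_1) + H(X) ≥ 3 · H(W). -/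
open scoped BigOperators

open FinProbSpace


namespace FinProbSpace

instance instFintypeΩ (μ : FinProbSpace) : Fintype μ.Ω := μ.fin

variable (μ : FinProbSpace)

theorem prob_def {S : Type} [DecidableEq S] (X : μ.Ω → S) (s : S) :
    μ.prob X s = ∑ ω : μ.Ω, if X ω = s then μ.p ω else 0 := rfl

theorem H_def {S : Type} [Fintype S] [DecidableEq S] (X : μ.Ω → S) :
    μ.H X = ∑ s : S, Real.negMulLog (μ.prob X s) := rfl

theorem sum_p : ∑ ω : μ.Ω, μ.p ω = 1 := μ.sum_one

theorem prob_nonneg {S : Type} [DecidableEq S] (X : μ.Ω → S) (s : S) :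
    0 ≤ μ.prob X s := by
  rw [prob_def]
  refine Finset.sum_nonneg fun ω _ => ?_
  split
  · exact μ.nonneg ω
  · exact le_rfl

theorem sum_prob {S : Type} [Fintype S] [DecidableEq S] (X : μ.Ω → S) :
    ∑ s : S, μ.prob X s = 1 := by
  simp_rw [prob_def]
  rw [Finset.sum_comm]
  simp only [Finset.sum_ite_eq, Finset.mem_univ, if_true]
  exact μ.sum_p

theorem sum_prob_fst {S T : Type} [Fintype S] [DecidableEq S] [DecidableEq T]
    (X : μ.Ω → S) (Y : μ.Ω → T) (t : T) :
    ∑ s : S, μ.prob (fun ω => (X ω, Y ω)) (s, t) = μ.prob Y t := by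
  simp_rw [prob_def]
  rw [Finset.sum_comm]
  refine Finset.sum_congr rfl fun ω _ => ?_
  by_cases hy : Y ω = t <;>
    simp [Prod.ext_iff, hy, Finset.sum_ite_eq]

theorem sum_prob_mid {S T U : Type} [DecidableEq S] [Fintype T] [DecidableEq T]
    [DecidableEq U] (X : μ.Ω → S) (Y : μ.Ω → T) (Z : μ.Ω → U) (x : S) (z : U) :
    ∑ y : T, μ.prob (fun ω => (X ω, Y ω, Z ω)) (x, y, z)
      = μ.prob (fun ω => (X ω, Z ω)) (x, z) := by
  simp_rw [prob_def]
  rw [Finset.sum_comm]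
  refine Finset.sum_congr rfl fun ω _ => ?_
  by_cases hx : X ω = x <;> by_cases hz : Z ω = z <;>
    simp [Prod.ext_iff, hx, hz, Finset.sum_ite_eq]

theorem H_comp_inj {S T : Type} [Fintype S] [DecidableEq S] [Fintype T] [DecidableEq T]
    (f : S → T) (hf : Function.Injective f) (X : μ.Ω → S) :
    μ.H (fun ω => f (X ω)) = μ.H X := by
  have himg : ∀ s, μ.prob (fun ω => f (X ω)) (f s) = μ.prob X s := by
    intro s
    rw [prob_def, prob_def]
    refine Finset.sum_congr rfl fun ω _ => ?_
    simp [hf.eq_iff]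
  have hzero : ∀ t, t ∉ Finset.univ.image f → μ.prob (fun ω => f (X ω)) t = 0 := by
    intro t ht
    rw [prob_def]
    refine Finset.sum_eq_zero fun ω _ => ?_
    have hne : f (X ω) ≠ t := by
      intro h; exact ht (Finset.mem_image.mpr ⟨X ω, Finset.mem_univ _, h⟩)
    simp [hne]
  have h1 : ∑ t : T, Real.negMulLog (μ.prob (fun ω => f (X ω)) t)
      = ∑ t ∈ Finset.univ.image f, Real.negMulLog (μ.prob (fun ω => f (X ω)) t) :=
    (Finset.sum_subset (Finset.subset_univ _) (fun t _ ht => by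
      rw [hzero t ht, Real.negMulLog_zero])).symm
  rw [H_def, H_def, h1, Finset.sum_image (fun s _ s' _ h => hf h)]
  exact Finset.sum_congr rfl fun s _ => by rw [himg]

theorem H_congr {S T : Type} [Fintype S] [DecidableEq S] [Fintype T] [DecidableEq T]
    (X : μ.Ω → S) (Y : μ.Ω → T) (f : S → T) (g : T → S)
    (hf : ∀ ω, f (X ω) = Y ω) (hg : ∀ ω, g (Y ω) = X ω) : μ.H X = μ.H Y := by
  have h1 : μ.H (fun ω => (X ω, Y ω)) = μ.H X := by
    have e : (fun ω => (X ω, Y ω)) = fun ω => ((fun s => (s, f s)) (X ω)) := by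
      funext ω; simp [hf ω]
    rw [e, μ.H_comp_inj (fun s => (s, f s)) (fun a b h => congrArg Prod.fst h) X]
  have h2 : μ.H (fun ω => (X ω, Y ω)) = μ.H Y := by
    have e : (fun ω => (X ω, Y ω)) = fun ω => ((fun t => (g t, t)) (Y ω)) := by
      funext ω; simp [hg ω]
    rw [e, μ.H_comp_inj (fun t => (g t, t)) (fun a b h => congrArg Prod.snd h) Y]
  rw [← h1, h2]

private theorem log_aux {q a b c : ℝ} (hq : 0 ≤ q) (hqa : q ≤ a) (hqb : q ≤ b) (hqc : q ≤ c) :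
    q - a * b / c ≤ q * (Real.log q + Real.log c - Real.log a - Real.log b) := by
  rcases eq_or_lt_of_le hq with h0 | h0
  · have ha : (0:ℝ) ≤ a := h0 ▸ hqa
    have hb : (0:ℝ) ≤ b := h0 ▸ hqb
    have hc : (0:ℝ) ≤ c := h0 ▸ hqc
    have habc : 0 ≤ a * b / c := by positivity
    rw [← h0]
    simp
    linarith
  · have ha : 0 < a := lt_of_lt_of_le h0 hqa
    have hb : 0 < b := lt_of_lt_of_le h0 hqb
    have hc : 0 < c := lt_of_lt_of_le h0 hqc
    have hr : 0 < a * b / (q * c) := by positivity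
    have key := Real.log_le_sub_one_of_pos hr
    have expand : Real.log (a * b / (q * c))
        = Real.log a + Real.log b - (Real.log q + Real.log c) := by
      rw [Real.log_div (by positivity) (by positivity), Real.log_mul ha.ne' hb.ne',
        Real.log_mul h0.ne' hc.ne']
    have hqr : q * (a * b / (q * c)) = a * b / c := by
      field_simp
    have h2 : q * Real.log (a * b / (q * c)) ≤ q * (a * b / (q * c) - 1) :=
      mul_le_mul_of_nonneg_left key h0.le
    rw [expand] at h2
    have h4 : q * (a * b / (q * c) - 1) = a * b / c - q := by
      rw [mul_sub, hqr]; ring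
    rw [h4] at h2
    have h3 : q * (Real.log q + Real.log c - Real.log a - Real.log b)
        = -(q * (Real.log a + Real.log b - (Real.log q + Real.log c))) := by ring
    linarith


theorem CMI_nonneg {S T U : Type} [Fintype S] [DecidableEq S] [Fintype T] [DecidableEq T]
    [Fintype U] [DecidableEq U] (X : μ.Ω → S) (Y : μ.Ω → T) (Z : μ.Ω → U) :
    0 ≤ μ.CMI X Y Z := by
  classical
  set q : S × T × U → ℝ := μ.prob (fun ω => (X ω, Y ω, Z ω)) with hqdef
  set a : S × U → ℝ := μ.prob (fun ω => (X ω, Z ω)) with hadef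
  set b : T × U → ℝ := μ.prob (fun ω => (Y ω, Z ω)) with hbdef
  set c : U → ℝ := μ.prob Z with hcdef
  have M1 : ∀ x z, ∑ y : T, q (x, y, z) = a (x, z) := by
    intro x z; rw [hqdef, hadef]; exact μ.sum_prob_mid X Y Z x z
  have M2 : ∀ y z, ∑ x : S, q (x, y, z) = b (y, z) := by
    intro y z; rw [hqdef, hbdef]
    exact μ.sum_prob_fst X (fun ω => (Y ω, Z ω)) (y, z)
  have M3 : ∀ z, ∑ x : S, a (x, z) = c z := by
    intro z; rw [hadef, hcdef]; exact μ.sum_prob_fst X Z z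
  have M4 : ∀ z, ∑ y : T, b (y, z) = c z := by
    intro z; rw [hbdef, hcdef]; exact μ.sum_prob_fst Y Z z
  have M5 : ∀ z, ∑ x : S, ∑ y : T, q (x, y, z) = c z := by
    intro z; rw [← M3 z]; exact Finset.sum_congr rfl fun x _ => M1 x z
  have hq0 : ∀ p : S × T × U, 0 ≤ q p := by
    intro p; rw [hqdef]; exact μ.prob_nonneg _ p
  have ha0 : ∀ p : S × U, 0 ≤ a p := by
    intro p; rw [hadef]; exact μ.prob_nonneg _ p
  have hqa : ∀ x y z, q (x, y, z) ≤ a (x, z) := by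
    intro x y z; rw [← M1 x z]
    exact Finset.single_le_sum (f := fun y' => q (x, y', z)) (fun i _ => hq0 _) (Finset.mem_univ y)
  have hqb : ∀ x y z, q (x, y, z) ≤ b (y, z) := by
    intro x y z; rw [← M2 y z]
    exact Finset.single_le_sum (f := fun x' => q (x', y, z)) (fun i _ => hq0 _) (Finset.mem_univ x)
  have hac : ∀ x z, a (x, z) ≤ c z := by
    intro x z; rw [← M3 z]
    exact Finset.single_le_sum (f := fun x' => a (x', z)) (fun i _ => ha0 _) (Finset.mem_univ x)
  have hqc : ∀ x y z, q (x, y, z) ≤ c z := fun x y z => (hqa x y z).trans (hac x z)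
  have eXZ : μ.H (fun ω => (X ω, Z ω))
      = ∑ x, ∑ y, ∑ z, q (x, y, z) * (-Real.log (a (x, z))) := by
    rw [H_def, Fintype.sum_prod_type, ← hadef]
    refine Finset.sum_congr rfl fun x _ => ?_
    conv_rhs => rw [Finset.sum_comm]
    refine Finset.sum_congr rfl fun z _ => ?_
    rw [← Finset.sum_mul, M1 x z, Real.negMulLog]
    ring
  have eYZ : μ.H (fun ω => (Y ω, Z ω))
      = ∑ x, ∑ y, ∑ z, q (x, y, z) * (-Real.log (b (y, z))) := by
    rw [H_def, Fintype.sum_prod_type, ← hbdef]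
    have reorder : (∑ x, ∑ y, ∑ z, q (x, y, z) * (-Real.log (b (y, z))))
        = ∑ y, ∑ z, ∑ x, q (x, y, z) * (-Real.log (b (y, z))) := by
      rw [Finset.sum_comm]
      exact Finset.sum_congr rfl fun y _ => Finset.sum_comm
    rw [reorder]
    refine Finset.sum_congr rfl fun y _ => Finset.sum_congr rfl fun z _ => ?_
    rw [← Finset.sum_mul, M2 y z, Real.negMulLog]
    ring
  have eZ : μ.H Z = ∑ x, ∑ y, ∑ z, q (x, y, z) * (-Real.log (c z)) := by
    rw [H_def, ← hcdef]
    have reorder : (∑ x, ∑ y, ∑ z, q (x, y, z) * (-Real.log (c z)))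
        = ∑ z, ∑ x, ∑ y, q (x, y, z) * (-Real.log (c z)) := by
      rw [show (∑ x, ∑ y, ∑ z, q (x, y, z) * (-Real.log (c z)))
          = ∑ x, ∑ z, ∑ y, q (x, y, z) * (-Real.log (c z)) from
        Finset.sum_congr rfl fun x _ => Finset.sum_comm]
      exact Finset.sum_comm
    rw [reorder]
    refine Finset.sum_congr rfl fun z _ => ?_
    simp_rw [← Finset.sum_mul]
    rw [M5 z, Real.negMulLog]
    ring
  have eXYZ : μ.H (fun ω => (X ω, Y ω, Z ω))
      = ∑ x, ∑ y, ∑ z, Real.negMulLog (q (x, y, z)) := by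
    rw [H_def, ← hqdef, Fintype.sum_prod_type]
    exact Finset.sum_congr rfl fun x _ =>
      Fintype.sum_prod_type (f := fun p => Real.negMulLog (q (x, p)))
  have S1 : ∑ x, ∑ y, ∑ z, q (x, y, z) = 1 := by
    have h := μ.sum_prob (fun ω => (X ω, Y ω, Z ω))
    rw [← hqdef] at h
    simp_rw [Fintype.sum_prod_type] at h
    exact h
  have hz : ∀ z, ∑ x, ∑ y, a (x, z) * b (y, z) / c z = c z := by
    intro z
    rcases eq_or_ne (c z) 0 with h0 | h0
    · have hsum : ∑ x, a (x, z) = 0 := by rw [M3 z, h0]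
      have ha0' : ∀ x ∈ Finset.univ, a (x, z) = 0 :=
        (Finset.sum_eq_zero_iff_of_nonneg (fun i _ => ha0 _)).mp hsum
      have : ∀ x, a (x, z) = 0 := fun x => ha0' x (Finset.mem_univ x)
      simp [this, h0]
    · have inner : ∀ x, ∑ y, a (x, z) * b (y, z) / c z = a (x, z) := by
        intro x
        rw [← Finset.sum_div, ← Finset.mul_sum, M4 z, mul_div_assoc, div_self h0, mul_one]
      rw [Finset.sum_congr rfl fun x _ => inner x, M3 z]
  have S2 : ∑ x, ∑ y, ∑ z, a (x, z) * b (y, z) / c z = 1 := by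
    have reorder : (∑ x, ∑ y, ∑ z, a (x, z) * b (y, z) / c z)
        = ∑ z, ∑ x, ∑ y, a (x, z) * b (y, z) / c z := by
      rw [show (∑ x, ∑ y, ∑ z, a (x, z) * b (y, z) / c z)
          = ∑ x, ∑ z, ∑ y, a (x, z) * b (y, z) / c z from
        Finset.sum_congr rfl fun x _ => Finset.sum_comm]
      exact Finset.sum_comm
    rw [reorder, Finset.sum_congr rfl fun z _ => hz z, hcdef]
    exact μ.sum_prob Z
  have key : ∀ x y z, q (x, y, z) - a (x, z) * b (y, z) / c z
      ≤ q (x, y, z) * (Real.log (q (x, y, z)) + Real.log (c z)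
        - Real.log (a (x, z)) - Real.log (b (y, z))) :=
    fun x y z => log_aux (hq0 _) (hqa x y z) (hqb x y z) (hqc x y z)
  calc (0:ℝ)
      = (∑ x, ∑ y, ∑ z, q (x, y, z)) - (∑ x, ∑ y, ∑ z, a (x, z) * b (y, z) / c z) := by
        rw [S1, S2]; ring
    _ = ∑ x, ∑ y, ∑ z, (q (x, y, z) - a (x, z) * b (y, z) / c z) := by
        simp_rw [← Finset.sum_sub_distrib]
    _ ≤ ∑ x, ∑ y, ∑ z, q (x, y, z) * (Real.log (q (x, y, z)) + Real.log (c z)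
          - Real.log (a (x, z)) - Real.log (b (y, z))) := by
        refine Finset.sum_le_sum fun x _ => Finset.sum_le_sum fun y _ =>
          Finset.sum_le_sum fun z _ => key x y z
    _ = μ.CMI X Y Z := by
        simp only [CMI]
        rw [eXZ, eYZ, eXYZ, eZ]
        simp_rw [← Finset.sum_add_distrib, ← Finset.sum_sub_distrib]
        refine Finset.sum_congr rfl fun x _ => Finset.sum_congr rfl fun y _ =>
          Finset.sum_congr rfl fun z _ => ?_
        rw [Real.negMulLog]
        ring


theorem H_unit : μ.H (fun _ : μ.Ω => ()) = 0 := by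
  have hp : μ.prob (fun _ : μ.Ω => ()) () = 1 := by
    rw [prob_def]
    simpa using μ.sum_p
  rw [H_def]
  rw [Fintype.sum_unique]
  have : (default : Unit) = () := rfl
  rw [this, hp, Real.negMulLog_one]

theorem MI_nonneg {S T : Type} [Fintype S] [DecidableEq S] [Fintype T] [DecidableEq T]
    (X : μ.Ω → S) (Y : μ.Ω → T) : 0 ≤ μ.MI X Y := by
  have h := μ.CMI_nonneg X Y (fun _ => ())
  simp only [CMI] at h
  have c1 : μ.H (fun ω => (X ω, ())) = μ.H X :=
    μ.H_congr _ _ Prod.fst (fun s => (s, ())) (fun ω => rfl) (fun ω => rfl)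
  have c2 : μ.H (fun ω => (Y ω, ())) = μ.H Y :=
    μ.H_congr _ _ Prod.fst (fun s => (s, ())) (fun ω => rfl) (fun ω => rfl)
  have c3 : μ.H (fun ω => (X ω, Y ω, ())) = μ.H (fun ω => (X ω, Y ω)) :=
    μ.H_congr _ _ (fun p => (p.1, p.2.1)) (fun p => (p.1, p.2, ()))
      (fun ω => rfl) (fun ω => rfl)
  have c4 := μ.H_unit
  simp only [MI]
  linarith

theorem Hc_nonneg {S T : Type} [Fintype S] [DecidableEq S] [Fintype T] [DecidableEq T]
    (X : μ.Ω → S) (Y : μ.Ω → T) : 0 ≤ μ.Hc X Y := by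
  have h := μ.CMI_nonneg X X Y
  simp only [CMI] at h
  have c : μ.H (fun ω => (X ω, X ω, Y ω)) = μ.H (fun ω => (X ω, Y ω)) :=
    μ.H_congr _ _ (fun p => (p.1, p.2.2)) (fun p => (p.1, p.1, p.2))
      (fun ω => rfl) (fun ω => rfl)
  simp only [Hc]
  linarith

end FinProbSpace

/-- **Converse α + β ≥ 3 of Theorem 5** (N = 2 capacity region), in entropy
form: with independence of `W` from `(Z_1, Z_2, Z_3)`, a signal `X` serving
qualified set `{1,2}` (correct for receivers 1, 2 and secure against 3) and a
signal `X'` serving `{1,3}` (correct for receiver 1 and secure against 2),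
we have `H(Z_1) + H(X) ≥ 3·H(W)`. -/
theorem sum_converse_N2
    (μ : FinProbSpace) {SW SZ1 SZ2 SZ3 SX SX' : Type}
    [Fintype SW] [DecidableEq SW] [Fintype SZ1] [DecidableEq SZ1]
    [Fintype SZ2] [DecidableEq SZ2] [Fintype SZ3] [DecidableEq SZ3]
    [Fintype SX] [DecidableEq SX] [Fintype SX'] [DecidableEq SX']
    (W : μ.Ω → SW) (Z1 : μ.Ω → SZ1) (Z2 : μ.Ω → SZ2) (Z3 : μ.Ω → SZ3)
    (X : μ.Ω → SX) (X' : μ.Ω → SX')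
    (hInd : μ.MI W (fun ω => (Z1 ω, Z2 ω, Z3 ω)) = 0)
    (hCorr1 : μ.Hc W (fun ω => (X ω, Z1 ω)) = 0)
    (hCorr2 : μ.Hc W (fun ω => (X ω, Z2 ω)) = 0)
    (hSec3 : μ.MI W (fun ω => (X ω, Z3 ω)) = 0)
    (hCorr1' : μ.Hc W (fun ω => (X' ω, Z1 ω)) = 0)
    (hSec2' : μ.MI W (fun ω => (X' ω, Z2 ω)) = 0) :
    μ.H Z1 + μ.H X ≥ 3 * μ.H W := by
  simp only [MI] at hInd hSec3 hSec2'
  simp only [Hc] at hCorr1 hCorr2 hCorr1'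
  -- canonicalization equalities
  have c1 : μ.H (fun ω => (X ω, Z1 ω)) = μ.H (fun ω => (Z1 ω, X ω)) :=
    μ.H_congr _ _ (fun p => (p.2, p.1)) (fun p => (p.2, p.1)) (fun ω => rfl) (fun ω => rfl)
  have c2 : μ.H (fun ω => (W ω, X ω, Z1 ω)) = μ.H (fun ω => (W ω, Z1 ω, X ω)) :=
    μ.H_congr _ _ (fun p => (p.1, p.2.2, p.2.1)) (fun p => (p.1, p.2.2, p.2.1))
      (fun ω => rfl) (fun ω => rfl)
  have c3 : μ.H (fun ω => (X ω, Z2 ω)) = μ.H (fun ω => (Z2 ω, X ω)) :=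
    μ.H_congr _ _ (fun p => (p.2, p.1)) (fun p => (p.2, p.1)) (fun ω => rfl) (fun ω => rfl)
  have c4 : μ.H (fun ω => (W ω, X ω, Z2 ω)) = μ.H (fun ω => (W ω, Z2 ω, X ω)) :=
    μ.H_congr _ _ (fun p => (p.1, p.2.2, p.2.1)) (fun p => (p.1, p.2.2, p.2.1))
      (fun ω => rfl) (fun ω => rfl)
  have c5 : μ.H (fun ω => (X ω, Z3 ω)) = μ.H (fun ω => (Z3 ω, X ω)) :=
    μ.H_congr _ _ (fun p => (p.2, p.1)) (fun p => (p.2, p.1)) (fun ω => rfl) (fun ω => rfl)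
  have c6 : μ.H (fun ω => (W ω, X ω, Z3 ω)) = μ.H (fun ω => (W ω, Z3 ω, X ω)) :=
    μ.H_congr _ _ (fun p => (p.1, p.2.2, p.2.1)) (fun p => (p.1, p.2.2, p.2.1))
      (fun ω => rfl) (fun ω => rfl)
  have c7 : μ.H (fun ω => (X' ω, Z1 ω)) = μ.H (fun ω => (Z1 ω, X' ω)) :=
    μ.H_congr _ _ (fun p => (p.2, p.1)) (fun p => (p.2, p.1)) (fun ω => rfl) (fun ω => rfl)
  have c8 : μ.H (fun ω => (W ω, X' ω, Z1 ω)) = μ.H (fun ω => (W ω, Z1 ω, X' ω)) :=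
    μ.H_congr _ _ (fun p => (p.1, p.2.2, p.2.1)) (fun p => (p.1, p.2.2, p.2.1))
      (fun ω => rfl) (fun ω => rfl)
  have c9 : μ.H (fun ω => (X' ω, Z2 ω)) = μ.H (fun ω => (Z2 ω, X' ω)) :=
    μ.H_congr _ _ (fun p => (p.2, p.1)) (fun p => (p.2, p.1)) (fun ω => rfl) (fun ω => rfl)
  have c10 : μ.H (fun ω => (W ω, X' ω, Z2 ω)) = μ.H (fun ω => (W ω, Z2 ω, X' ω)) :=
    μ.H_congr _ _ (fun p => (p.1, p.2.2, p.2.1)) (fun p => (p.1, p.2.2, p.2.1))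
      (fun ω => rfl) (fun ω => rfl)
  have c11 : μ.H (fun ω => ((Z1 ω, Z3 ω), Z2 ω)) = μ.H (fun ω => (Z1 ω, Z2 ω, Z3 ω)) :=
    μ.H_congr _ _ (fun p => (p.1.1, p.2, p.1.2)) (fun p => ((p.1, p.2.2), p.2.1))
      (fun ω => rfl) (fun ω => rfl)
  have c12 : μ.H (fun ω => (W ω, (Z1 ω, Z3 ω), Z2 ω))
      = μ.H (fun ω => (W ω, Z1 ω, Z2 ω, Z3 ω)) :=
    μ.H_congr _ _ (fun p => (p.1, p.2.1.1, p.2.2, p.2.1.2))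
      (fun p => (p.1, (p.2.1, p.2.2.2), p.2.2.1)) (fun ω => rfl) (fun ω => rfl)
  have c13 : μ.H (fun ω => (Z3 ω, Z1 ω, Z2 ω)) = μ.H (fun ω => (Z1 ω, Z2 ω, Z3 ω)) :=
    μ.H_congr _ _ (fun p => (p.2.1, p.2.2, p.1)) (fun p => (p.2.2, p.1, p.2.1))
      (fun ω => rfl) (fun ω => rfl)
  have c14 : μ.H (fun ω => (W ω, Z3 ω, Z1 ω, Z2 ω))
      = μ.H (fun ω => (W ω, Z1 ω, Z2 ω, Z3 ω)) :=
    μ.H_congr _ _ (fun p => (p.1, p.2.2.1, p.2.2.2, p.2.1))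
      (fun p => (p.1, p.2.2.2, p.2.1, p.2.2.1)) (fun ω => rfl) (fun ω => rfl)
  have c15 : μ.H (fun ω => (Z1 ω, W ω, X ω)) = μ.H (fun ω => (W ω, Z1 ω, X ω)) :=
    μ.H_congr _ _ (fun p => (p.2.1, p.1, p.2.2)) (fun p => (p.2.1, p.1, p.2.2))
      (fun ω => rfl) (fun ω => rfl)
  have c16 : μ.H (fun ω => (Z2 ω, W ω, X ω)) = μ.H (fun ω => (W ω, Z2 ω, X ω)) :=
    μ.H_congr _ _ (fun p => (p.2.1, p.1, p.2.2)) (fun p => (p.2.1, p.1, p.2.2))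
      (fun ω => rfl) (fun ω => rfl)
  have c17 : μ.H (fun ω => (Z1 ω, Z2 ω, W ω, X ω))
      = μ.H (fun ω => (W ω, Z1 ω, Z2 ω, X ω)) :=
    μ.H_congr _ _ (fun p => (p.2.2.1, p.1, p.2.1, p.2.2.2))
      (fun p => (p.2.1, p.2.2.1, p.1, p.2.2.2)) (fun ω => rfl) (fun ω => rfl)
  have c18 : μ.H (fun ω => (X ω, W ω, Z1 ω, Z2 ω))
      = μ.H (fun ω => (W ω, Z1 ω, Z2 ω, X ω)) :=
    μ.H_congr _ _ (fun p => (p.2.1, p.2.2.1, p.2.2.2, p.1))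
      (fun p => (p.2.2.2, p.1, p.2.1, p.2.2.1)) (fun ω => rfl) (fun ω => rfl)
  have c19 : μ.H (fun ω => (X' ω, W ω, Z1 ω, Z2 ω))
      = μ.H (fun ω => (W ω, Z1 ω, Z2 ω, X' ω)) :=
    μ.H_congr _ _ (fun p => (p.2.1, p.2.2.1, p.2.2.2, p.1))
      (fun p => (p.2.2.2, p.1, p.2.1, p.2.2.1)) (fun ω => rfl) (fun ω => rfl)
  have c20 : μ.H (fun ω => (X ω, X' ω, W ω, Z1 ω, Z2 ω))
      = μ.H (fun ω => (W ω, Z1 ω, Z2 ω, X ω, X' ω)) :=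
    μ.H_congr _ _ (fun p => (p.2.2.1, p.2.2.2.1, p.2.2.2.2, p.1, p.2.1))
      (fun p => (p.2.2.2.1, p.2.2.2.2, p.1, p.2.1, p.2.2.1)) (fun ω => rfl) (fun ω => rfl)
  have c21 : μ.H (fun ω => (Z2 ω, Z1 ω, X' ω)) = μ.H (fun ω => (Z1 ω, Z2 ω, X' ω)) :=
    μ.H_congr _ _ (fun p => (p.2.1, p.1, p.2.2)) (fun p => (p.2.1, p.1, p.2.2))
      (fun ω => rfl) (fun ω => rfl)
  have c22 : μ.H (fun ω => (W ω, Z2 ω, Z1 ω, X' ω))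
      = μ.H (fun ω => (W ω, Z1 ω, Z2 ω, X' ω)) :=
    μ.H_congr _ _ (fun p => (p.1, p.2.2.1, p.2.1, p.2.2.2))
      (fun p => (p.1, p.2.2.1, p.2.1, p.2.2.2)) (fun ω => rfl) (fun ω => rfl)
  have c23 : μ.H (fun ω => (Z1 ω, X' ω, Z2 ω)) = μ.H (fun ω => (Z1 ω, Z2 ω, X' ω)) :=
    μ.H_congr _ _ (fun p => (p.1, p.2.2, p.2.1)) (fun p => (p.1, p.2.2, p.2.1))
      (fun ω => rfl) (fun ω => rfl)
  have c24 : μ.H (fun ω => ((Z1 ω, X ω), W ω, Z2 ω, X' ω))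
      = μ.H (fun ω => (W ω, Z1 ω, Z2 ω, X ω, X' ω)) :=
    μ.H_congr _ _ (fun p => (p.2.1, p.1.1, p.2.2.1, p.1.2, p.2.2.2))
      (fun p => ((p.2.1, p.2.2.2.1), p.1, p.2.2.1, p.2.2.2.2)) (fun ω => rfl) (fun ω => rfl)
  -- information inequalities
  have i1 := μ.MI_nonneg Z1 X
  have i2 := μ.MI_nonneg W X
  have i3 := μ.CMI_nonneg W Z3 X
  have i4 := μ.MI_nonneg W Z2
  have i5 := μ.CMI_nonneg W (fun ω => (Z1 ω, Z3 ω)) Z2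
  have i6 := μ.MI_nonneg W (fun ω => (Z1 ω, Z2 ω))
  have i7 := μ.CMI_nonneg W Z3 (fun ω => (Z1 ω, Z2 ω))
  have i8 := μ.CMI_nonneg Z1 Z2 (fun ω => (W ω, X ω))
  have i9 := μ.MI_nonneg X Z2
  have i10 := μ.CMI_nonneg X X' (fun ω => (W ω, Z1 ω, Z2 ω))
  have i11 := μ.CMI_nonneg W Z2 (fun ω => (Z1 ω, X' ω))
  have i12 := μ.CMI_nonneg Z1 X' Z2
  have i13 := μ.Hc_nonneg (fun ω => (Z1 ω, X ω)) (fun ω => (W ω, Z2 ω, X' ω))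
  have i14 := μ.Hc_nonneg W (fun ω => (Z1 ω, Z2 ω, X' ω))
  simp only [MI] at i1 i2 i4 i6 i9
  simp only [CMI] at i3 i5 i7 i8 i10 i11 i12
  simp only [Hc] at i13 i14
  linarith [hInd, hCorr1, hCorr2, hSec3, hCorr1', hSec2',
    c1, c2, c3, c4, c5, c6, c7, c8, c9, c10, c11, c12, c13, c14, c15, c16, c17,
    c18, c19, c20, c21, c22, c23, c24,
    i1, i2, i3, i4, i5, i6, i7, i8, i9, i10, i11, i12, i13, i14]
end
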